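/- arXiv:1501.02517 — 3 statements merged into one kernel-verified Lean document; each statement's English description precedes it below -/
import Mathlib

section
/- Let P be a d-polytope, y a vertex of P incident to exactly m facets with m > d (a nonsimple vertex of excess m - d), and let F be a facet of P not containing y. In the wedge W of P over F, the two images y_b and y_t of y are joined by an edge whose affine hull is the intersection of the m vertical facets of W corresponding to the facets of P through y; in particular this vertical edge is a 1-dimensional nonsimplicity of the (d+1)-polytope W of excess m - d. -/
/-!
A vertex `y` of the polyhedron `{x | ∀ i, 0 ≤ A i x}` is the only point at which all constraints
active at `y` vanish: moving from `y` towards another such point keeps the inactive constraints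
positive for a while, in both directions, which would put `y` in the middle of a segment of the
polyhedron. The wedge projects into the polyhedron, so its fibre over the vertex `y` is a face;
that fibre is the vertical segment from `y_b` to `y_t`, whose affine hull is the vertical line
over `y`, i.e. the common zero set of the vertical facets through `y`.
-/

open Set Filter Topology AffineMap

section Polyhedron

variable {E : Type*} [AddCommGroup E] [Module ℝ E] {ι : Type*} {A : ι → E →ᵃ[ℝ] ℝ}

theorem eventually_lineMap_mem_polyhedron [Finite ι] {y v : E} (hy : ∀ i, 0 ≤ A i y)
    (hv : ∀ i, A i y = 0 → A i v = 0) :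
    ∀ᶠ ε in 𝓝 (0 : ℝ), lineMap y v ε ∈ {x | ∀ i, 0 ≤ A i x} := by
  refine eventually_all.2 fun i => ?_
  rcases (hy i).eq_or_lt with hi | hi
  · refine Eventually.of_forall fun ε => ?_
    simp [← hi, hv i hi.symm]
  · have hcont : Tendsto (fun ε : ℝ => A i (lineMap y v ε)) (𝓝 0) (𝓝 (A i y)) := by
      simpa using (lineMap_continuous (p := A i y) (q := A i v)).tendsto (0 : ℝ)
    exact hcont.eventually_const_le hi

theorem eq_of_mem_extremePoints_polyhedron [Finite ι] {y v : E}
    (hy : y ∈ extremePoints ℝ {x | ∀ i, 0 ≤ A i x}) (hv : ∀ i, A i y = 0 → A i v = 0) :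
    v = y := by
  obtain ⟨δ, hδ, hball⟩ := Metric.eventually_nhds_iff.1 (eventually_lineMap_mem_polyhedron hy.1 hv)
  have hmem : ∀ ε, |ε| < δ → lineMap y v ε ∈ {x | ∀ i, 0 ≤ A i x} := fun ε hε =>
    hball (by simpa using hε)
  have hmid : y ∈ openSegment ℝ (lineMap y v (δ / 2)) (lineMap y v (-(δ / 2))) :=
    ⟨1 / 2, 1 / 2, by norm_num, by norm_num, by norm_num, by
      simp only [lineMap_apply_module']; module⟩
  have hδ' : |δ / 2| < δ := by rw [abs_of_pos (by positivity)]; linarith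
  have hyv : lineMap y v (δ / 2) = y := hy.2 (hmem _ hδ') (hmem _ (by rwa [abs_neg])) hmid
  exact ((lineMap_eq_left_iff.1 hyv).resolve_right (by positivity)).symm

end Polyhedron

theorem isExtreme_inter_preimage_singleton {𝕜 E F : Type*} [Ring 𝕜] [PartialOrder 𝕜]
    [IsOrderedRing 𝕜] [AddCommGroup E] [Module 𝕜 E] [AddCommGroup F] [Module 𝕜 F]
    {W : Set E} {P : Set F} (f : E →ᵃ[𝕜] F) {y : F} (hWP : MapsTo f W P) (hy : y ∈ extremePoints 𝕜 P) :
    IsExtreme 𝕜 W (W ∩ f ⁻¹' {y}) := by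
  refine ⟨inter_subset_left, fun x₁ hx₁ x₂ hx₂ x ⟨_, hxy⟩ hx => ⟨hx₁, ?_⟩⟩
  have hyseg : y ∈ openSegment 𝕜 (f x₁) (f x₂) := by
    rw [← hxy, ← image_openSegment]; exact mem_image_of_mem f hx
  exact hy.2 (hWP hx₁) (hWP hx₂) hyseg

theorem affineSpan_pair_prod_mk {𝕜 E : Type*} [Field 𝕜] [AddCommGroup E] [Module 𝕜 E] (x : E)
    {a b : 𝕜} (hab : a ≠ b) :
    (affineSpan 𝕜 {(x, a), (x, b)} : Set (E × 𝕜)) = {p | p.1 = x} := by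
  ext ⟨z, s⟩
  simp only [SetLike.mem_coe, mem_affineSpan_pair_iff_exists_lineMap_eq, mem_ofPred_eq,
    Prod.ext_iff, fst_lineMap, snd_lineMap, lineMap_same_apply]
  refine ⟨fun ⟨_, hx, _⟩ => hx.symm, fun hz => ⟨(s - a) / (b - a), hz.symm, ?_⟩⟩
  simp [lineMap_apply_module', sub_ne_zero.2 hab.symm]

section Wedge

variable {E : Type*} [AddCommGroup E] [Module ℝ E] {ι : Type*}

/-- `{(v, t) | v ∈ P, |t| ≤ A i₀ v / C}`, with `P` cut out by the constraints `A i`. -/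
def wedge (A : ι → E →ᵃ[ℝ] ℝ) (i₀ : ι) (C : ℝ) : Set (E × ℝ) :=
  {p | (∀ i, i ≠ i₀ → 0 ≤ A i p.1) ∧ 0 ≤ A i₀ p.1 + C * p.2 ∧ 0 ≤ A i₀ p.1 - C * p.2}

variable {A : ι → E →ᵃ[ℝ] ℝ} {i₀ : ι} {C : ℝ}

theorem mapsTo_fst_wedge :
    MapsTo (AffineMap.fst : E × ℝ →ᵃ[ℝ] E) (wedge A i₀ C) {x | ∀ i, 0 ≤ A i x} := by
  rintro p ⟨hp, hplus, hminus⟩ i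
  by_cases hi : i = i₀
  · subst hi
    rw [coe_fst]
    linarith
  · exact hp i hi

theorem wedge_inter_fst_preimage_eq_segment {y : E} (hy : ∀ i, 0 ≤ A i y) (hC : 0 < C) :
    wedge A i₀ C ∩ (AffineMap.fst : E × ℝ →ᵃ[ℝ] E) ⁻¹' {y} =
      segment ℝ (y, -(A i₀ y / C)) (y, A i₀ y / C) := by
  rw [← Prod.image_mk_segment_right, segment_eq_Icc (neg_le_self (div_nonneg (hy i₀) hC.le))]
  ext ⟨x, s⟩
  simp only [wedge, mem_inter_iff, mem_ofPred_eq, mem_preimage, coe_fst, mem_singleton_iff,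
    mem_image, mem_Icc, Prod.mk.injEq, ← neg_div, div_le_iff₀ hC, le_div_iff₀ hC]
  constructor
  · rintro ⟨⟨-, hplus, hminus⟩, rfl⟩
    exact ⟨s, ⟨by linarith, by linarith⟩, rfl, rfl⟩
  · rintro ⟨s, ⟨hlo, hhi⟩, rfl, rfl⟩
    exact ⟨⟨fun i _ => hy i, by linarith, by linarith⟩, rfl⟩

end Wedge

theorem wedge_nonsimple_vertex_gives_nonsimple_edge_general
    {d : ℕ} {ι : Type*} [Fintype ι]
    (A : ι → ((Fin d → ℝ) →ᵃ[ℝ] ℝ))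
    (P : Set (Fin d → ℝ)) (hP : P = {v | ∀ i : ι, 0 ≤ A i v})
    (y : Fin d → ℝ) (hy : y ∈ Set.extremePoints ℝ P)
    (m : ℕ)
    (i₀ : ι) (hi₀ : 0 < A i₀ y)
    (C : ℝ) (hC : 0 < C)
    (W : Set ((Fin d → ℝ) × ℝ))
    (hW : W = {p : (Fin d → ℝ) × ℝ | (∀ i : ι, i ≠ i₀ → 0 ≤ A i p.1) ∧
      0 ≤ A i₀ p.1 + C * p.2 ∧ 0 ≤ A i₀ p.1 - C * p.2}) :
    IsExtreme ℝ W (segment ℝ (y, -(A i₀ y / C)) (y, A i₀ y / C)) ∧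
    (affineSpan ℝ {((y, -(A i₀ y / C)) : (Fin d → ℝ) × ℝ), (y, A i₀ y / C)} : Set ((Fin d → ℝ) × ℝ))
      = ⋂ i ∈ {i : ι | A i y = 0}, {p : (Fin d → ℝ) × ℝ | A i p.1 = 0} ∧
    -- the excess of this 1-dimensional nonsimplicity of the (d+1)-polytope `W`
    m - ((d + 1) - 1) = m - d := by
  subst hP
  obtain rfl : W = wedge A i₀ C := hW
  refine ⟨?_, ?_, by omega⟩
  · rw [← wedge_inter_fst_preimage_eq_segment hy.1 hC]
    exact isExtreme_inter_preimage_singleton _ mapsTo_fst_wedge hy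
  · rw [affineSpan_pair_prod_mk y (neg_lt_self (div_pos hi₀ hC)).ne]
    ext p
    simp only [mem_iInter, mem_ofPred_eq]
    exact ⟨fun hp i hi => hp ▸ hi, fun hp => eq_of_mem_extremePoints_polyhedron hy hp⟩

/-- Nonsimple vertices generate nonsimple vertical edges under wedging.  Let
`P = {v | ∀ i, 0 ≤ A i v}` be a `d`-polytope, `y` a vertex of `P` incident to
exactly `m > d` facets, and `i₀` the index of a facet not containing `y`.  In
the wedge `W` of `P` over the facet `i₀`, the two images
`y_b = (y, -(A i₀ y)/C)` and `y_t = (y, (A i₀ y)/C)` of `y` are joined by an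
edge of `W` whose affine hull is the intersection of the `m` vertical facets of
`W` corresponding to the facets of `P` through `y`; this vertical edge is a
`1`-dimensional nonsimplicity of the `(d+1)`-polytope `W` of excess `m - d`. -/
theorem wedge_nonsimple_vertex_gives_nonsimple_edge
    {d : ℕ} {ι : Type*} [Fintype ι]
    (A : ι → ((Fin d → ℝ) →ᵃ[ℝ] ℝ))
    (P : Set (Fin d → ℝ)) (hP : P = {v | ∀ i : ι, 0 ≤ A i v})
    (hPcomp : IsCompact P)
    (y : Fin d → ℝ) (hy : y ∈ Set.extremePoints ℝ P)
    (m : ℕ) (hm : Nat.card {i : ι // A i y = 0} = m) (hmd : d < m)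
    (i₀ : ι) (hi₀ : 0 < A i₀ y)
    (C : ℝ) (hC : 0 < C)
    (W : Set ((Fin d → ℝ) × ℝ))
    (hW : W = {p : (Fin d → ℝ) × ℝ | (∀ i : ι, i ≠ i₀ → 0 ≤ A i p.1) ∧
      0 ≤ A i₀ p.1 + C * p.2 ∧ 0 ≤ A i₀ p.1 - C * p.2}) :
    IsExtreme ℝ W (segment ℝ (y, -(A i₀ y / C)) (y, A i₀ y / C)) ∧
    (affineSpan ℝ {((y, -(A i₀ y / C)) : (Fin d → ℝ) × ℝ), (y, A i₀ y / C)} : Set ((Fin d → ℝ) × ℝ))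
      = ⋂ i ∈ {i : ι | A i y = 0}, {p : (Fin d → ℝ) × ℝ | A i p.1 = 0} ∧
    -- the excess of this 1-dimensional nonsimplicity of the (d+1)-polytope `W`
    m - ((d + 1) - 1) = m - d :=
  wedge_nonsimple_vertex_gives_nonsimple_edge_general A P hP y hy m i₀ hi₀ C hC W hW
end

section
/- Perturbing a boundary facet does not reduce a nonsimplicity: let Q be a d-polytope with a k-dimensional nonsimplicity, i.e., a k-face S whose affine hull is the intersection of m > d - k facets (the space-supporting facets), and let B be a facet incident to S that is not among the m space-supporting facets (a boundary facet of S). Then any sufficiently small perturbation of B alone yields a polytope that still has a k-dimensional nonsimplicity supported by the same m facets; in particular the excess m - (d-k) is unchanged. -/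
/-!
Let `L = ⋂ i ∈ M, {A i = 0}` and pick `w ∈ S` with `A b w > 0`; for small `t` the perturbed
constraint is still positive at `w`. Take `S'` to be the perturbed polytope cut by `L`: it is a
face because the constraints indexed by `M` are not perturbed. Its affine hull is `L`, since a
point `x ∈ S` violates at most the perturbed constraint, so walking from `x` towards `w` meets
`S'` strictly before `w`, and `x` lies on the line through that point and `w`.
-/

section AffineSpace

open AffineMap

variable {k V P : Type*} [Field k] [AddCommGroup V] [Module k V] [AddTorsor V P]

theorem AffineSubspace.mem_of_lineMap_mem {s : AffineSubspace k P} {x w : P} {θ : k}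
    (hθ : θ ≠ 1) (hw : w ∈ s) (h : lineMap x w θ ∈ s) : x ∈ s := by
  have hx : lineMap w (lineMap x w θ) (1 - θ)⁻¹ = x := by
    rw [← lineMap_apply_one_sub w x θ, lineMap_lineMap_right,
      inv_mul_cancel₀ (sub_ne_zero.2 hθ.symm), lineMap_apply_one]
  exact hx ▸ AffineMap.lineMap_mem _ hw h

end AffineSpace

section Polyhedron

open Set AffineMap

variable {E : Type*} [AddCommGroup E] [Module ℝ E]

theorem AffineMap.exists_mem_Ico_nonneg_lineMap (f : E →ᵃ[ℝ] ℝ) (x : E) {w : E}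
    (hw : 0 < f w) : ∃ θ ∈ Ico (0 : ℝ) 1, 0 ≤ f (lineMap x w θ) := by
  by_cases hx : 0 ≤ f x
  · exact ⟨0, ⟨le_rfl, one_pos⟩, by simpa using hx⟩
  push Not at hx
  refine ⟨f x / (f x - f w), ⟨div_nonneg_of_nonpos hx.le (by linarith), ?_⟩, ?_⟩
  · rw [div_lt_one_of_neg (by linarith)]
    linarith
  · have hzero : f x / (f x - f w) * (f w - f x) + f x = 0 := by
      field_simp [(by linarith : f x - f w ≠ 0)]
      ring
    rw [apply_lineMap, lineMap_apply_ring', hzero]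

theorem AffineMap.eq_zero_of_mem_openSegment (f : E →ᵃ[ℝ] ℝ) {x y z : E} (hx : 0 ≤ f x)
    (hy : 0 ≤ f y) (hz : z ∈ openSegment ℝ x y) (hfz : f z = 0) : f x = 0 := by
  obtain ⟨a, c, ha, hc, hac, rfl⟩ := hz
  rw [Convex.combo_affine_apply hac, smul_eq_mul, smul_eq_mul] at hfz
  have := (add_eq_zero_iff_of_nonneg (mul_nonneg ha.le hx) (mul_nonneg hc.le hy)).1 hfz
  exact (mul_eq_zero.1 this.1).resolve_left ha.ne'

theorem isExtreme_inter_biInter_setOf_eq_zero {ι : Type*} {K : Set E} {f : ι → E →ᵃ[ℝ] ℝ}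
    {s : Set ι} (hf : ∀ i ∈ s, ∀ x ∈ K, 0 ≤ f i x) :
    IsExtreme ℝ K (K ∩ ⋂ i ∈ s, {x | f i x = 0}) := by
  refine ⟨inter_subset_left, fun x hx y hy z ⟨_, hz⟩ hzxy => ⟨hx, ?_⟩⟩
  simp only [mem_iInter₂, mem_ofPred_eq] at hz ⊢
  exact fun i hi => (f i).eq_zero_of_mem_openSegment (hf i hi x hx) (hf i hi y hy) hzxy (hz i hi)

theorem convex_setOf_forall_nonneg {ι : Type*} (f : ι → E →ᵃ[ℝ] ℝ) (p : ι → Prop) :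
    Convex ℝ {x | ∀ i, p i → 0 ≤ f i x} := by
  intro x hx y hy a c ha hc hac i hi
  rw [Convex.combo_affine_apply hac]
  exact add_nonneg (smul_nonneg ha (hx i hi)) (smul_nonneg hc (hy i hi))

theorem subset_affineSpan_inter_setOf_nonneg {C : Set E} (hC : Convex ℝ C) {f : E →ᵃ[ℝ] ℝ}
    {w : E} (hw : w ∈ C) (hfw : 0 < f w) : C ⊆ affineSpan ℝ (C ∩ {x | 0 ≤ f x}) := by
  intro x hx
  obtain ⟨θ, hθ, hfθ⟩ := f.exists_mem_Ico_nonneg_lineMap x hfw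
  exact AffineSubspace.mem_of_lineMap_mem hθ.2.ne (subset_affineSpan ℝ _ ⟨hw, hfw.le⟩)
    (subset_affineSpan ℝ _ ⟨hC.lineMap_mem hx hw (Ico_subset_Icc_self hθ), hfθ⟩)

theorem subset_affineSpan_inter_setOf_forall_nonneg {ι : Type*} (f : ι → E →ᵃ[ℝ] ℝ) {b : ι}
    {L S : Set E} (hL : Convex ℝ L) (hSL : S ⊆ L) (hS : ∀ x ∈ S, ∀ i, i ≠ b → 0 ≤ f i x)
    {w : E} (hwS : w ∈ S) (hw : 0 < f b w) :
    S ⊆ affineSpan ℝ ({x | ∀ i, 0 ≤ f i x} ∩ L) := by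
  let C := {x | ∀ i, i ≠ b → 0 ≤ f i x} ∩ L
  have hSC : S ⊆ C := fun x hx => ⟨hS x hx, hSL hx⟩
  have hCb : C ∩ {x | 0 ≤ f b x} ⊆ {x | ∀ i, 0 ≤ f i x} ∩ L := by
    rintro x ⟨⟨hx, hxL⟩, hxb⟩
    refine ⟨fun i => ?_, hxL⟩
    by_cases hi : i = b
    · exact hi ▸ hxb
    · exact hx i hi
  exact hSC.trans <| (subset_affineSpan_inter_setOf_nonneg
    ((convex_setOf_forall_nonneg f _).inter hL) (hSC hwS) hw).trans (affineSpan_mono ℝ hCb)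

end Polyhedron

open Filter Topology in
theorem exists_pos_forall_abs_lt_pos_add_mul {a : ℝ} (ha : 0 < a) (c : ℝ) :
    ∃ ε > 0, ∀ t : ℝ, |t| < ε → 0 < a + t * c := by
  have : Tendsto (fun t : ℝ => a + t * c) (𝓝 0) (𝓝 a) := by
    simpa using ((tendsto_id.mul_const c).const_add a : Tendsto _ (𝓝 (0 : ℝ)) _)
  simpa [Real.dist_0_eq_abs] using Metric.eventually_nhds_iff.1 (this.eventually (lt_mem_nhds ha))

theorem perturb_boundary_facet_preserves_nonsimplicity_general
    {d : ℕ} {ι : Type*} [DecidableEq ι]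
    (A : ι → ((Fin d → ℝ) →ᵃ[ℝ] ℝ))
    (Q : Set (Fin d → ℝ)) (hQ : Q = {v | ∀ i : ι, 0 ≤ A i v})
    (k : ℕ) (M : Finset ι)
    (S : Set (Fin d → ℝ)) (hSface : IsExtreme ℝ Q S)
    (hSdim : Module.finrank ℝ (affineSpan ℝ S).direction = k)
    (hSspan : (affineSpan ℝ S : Set (Fin d → ℝ)) = ⋂ i ∈ M, {v | A i v = 0})
    (b : ι) (hb : b ∉ M)
    -- `b` is a boundary facet of `S`: it meets `S` but does not contain it
    (hbS : (∃ v ∈ S, A b v = 0) ∧ ∃ v ∈ S, A b v ≠ 0)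
    (g : (Fin d → ℝ) →ᵃ[ℝ] ℝ) :
    ∃ ε₀ > (0 : ℝ), ∀ t : ℝ, |t| < ε₀ →
      ∃ S' : Set (Fin d → ℝ),
        IsExtreme ℝ {v | ∀ i : ι, 0 ≤ (if i = b then A b + t • g else A i) v} S' ∧
        S'.Nonempty ∧
        Module.finrank ℝ (affineSpan ℝ S').direction = k ∧
        (affineSpan ℝ S' : Set (Fin d → ℝ)) = ⋂ i ∈ M, {v | A i v = 0} := by
  obtain ⟨-, w, hwS, hbw⟩ := hbS
  have hSQ : S ⊆ {v | ∀ i, 0 ≤ A i v} := hQ ▸ hSface.subset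
  obtain ⟨ε, hε, hpos⟩ :=
    exists_pos_forall_abs_lt_pos_add_mul ((hSQ hwS b).lt_of_ne' hbw) (g w)
  refine ⟨ε, hε, fun t ht => ?_⟩
  set A' : ι → (Fin d → ℝ) →ᵃ[ℝ] ℝ := fun i => if i = b then A b + t • g else A i
  have hA' : ∀ i, i ≠ b → A' i = A i := fun i hi => if_neg hi
  set L := ⋂ i ∈ M, {v : Fin d → ℝ | A i v = 0}
  have hface : IsExtreme ℝ {v | ∀ i, 0 ≤ A' i v} ({v | ∀ i, 0 ≤ A' i v} ∩ L) :=
    isExtreme_inter_biInter_setOf_eq_zero fun i hi x hx =>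
      hA' i (ne_of_mem_of_not_mem hi hb) ▸ hx i
  have hspan : affineSpan ℝ ({v | ∀ i, 0 ≤ A' i v} ∩ L) = affineSpan ℝ S := by
    refine le_antisymm (affineSpan_le.2 (hSspan ▸ Set.inter_subset_right)) (affineSpan_le.2 ?_)
    refine subset_affineSpan_inter_setOf_forall_nonneg A' (hSspan ▸ (affineSpan ℝ S).convex)
      (hSspan ▸ subset_affineSpan ℝ S) (fun x hx i hi => hA' i hi ▸ hSQ hx i) hwS ?_
    simpa [A'] using hpos t ht
  exact ⟨_, hface, (affineSpan_nonempty ℝ).1 (hspan ▸ (affineSpan_nonempty ℝ).2 ⟨w, hwS⟩),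
    hspan ▸ hSdim, hspan ▸ hSspan⟩

/-- Perturbing a boundary facet does not reduce a nonsimplicity.  Let
`Q = {v | ∀ i, 0 ≤ A i v}` be a `d`-polytope with a `k`-face `S` whose affine
hull is the intersection of the `m > d - k` facet hyperplanes indexed by `M`
(the space-supporting facets), and let `b ∉ M` be a boundary facet incident to
`S`.  Then any sufficiently small perturbation of `b` alone yields a polytope
that still has a `k`-dimensional nonsimplicity supported by the same `m`
facets; in particular the excess `m - (d - k)` is unchanged. -/
theorem perturb_boundary_facet_preserves_nonsimplicity
    {d : ℕ} {ι : Type*} [Fintype ι] [DecidableEq ι]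
    (A : ι → ((Fin d → ℝ) →ᵃ[ℝ] ℝ))
    (Q : Set (Fin d → ℝ)) (hQ : Q = {v | ∀ i : ι, 0 ≤ A i v})
    (hQcomp : IsCompact Q)
    (k m : ℕ) (M : Finset ι) (hM : M.card = m) (hmk : d - k < m)
    (S : Set (Fin d → ℝ)) (hSface : IsExtreme ℝ Q S) (hSne : S.Nonempty)
    (hSdim : Module.finrank ℝ (affineSpan ℝ S).direction = k)
    (hSspan : (affineSpan ℝ S : Set (Fin d → ℝ)) = ⋂ i ∈ M, {v | A i v = 0})
    (b : ι) (hb : b ∉ M)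
    -- `b` is a boundary facet of `S`: it meets `S` but does not contain it
    (hbS : (∃ v ∈ S, A b v = 0) ∧ ∃ v ∈ S, A b v ≠ 0)
    (g : (Fin d → ℝ) →ᵃ[ℝ] ℝ) :
    ∃ ε₀ > (0 : ℝ), ∀ t : ℝ, |t| < ε₀ →
      ∃ S' : Set (Fin d → ℝ),
        IsExtreme ℝ {v | ∀ i : ι, 0 ≤ (if i = b then A b + t • g else A i) v} S' ∧
        S'.Nonempty ∧
        Module.finrank ℝ (affineSpan ℝ S').direction = k ∧
        (affineSpan ℝ S' : Set (Fin d → ℝ)) = ⋂ i ∈ M, {v | A i v = 0} :=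
  perturb_boundary_facet_preserves_nonsimplicity_general A Q hQ k M S hSface hSdim hSspan b hb hbS g
end

section
/- The 5-dimensional polytope P_5 defined by the 25 explicit inequalities H^T(P_5) v ≥ 0 of Santos–Weibel (listed in the appendix, embedded in the flat {1} × ℝ^5) is a spindle with apexes x and y: the vertex x satisfies the first 12 inequalities with equality and the last 13 strictly, the vertex y satisfies the last 13 with equality and the first 12 strictly, and every facet of P_5 contains x or y. -/
/-!
Every row of `X` starts with `(1, 100)` and every row of `Y` with `(1, -100)`, so the points
`x = (1, -1/100, 0, 0, 0, 0)` and `y = (1, 1/100, 0, 0, 0, 0)` make exactly the rows of `X`,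
resp. `Y`, vanish, and all other rows take the value `2` there. Each of them is a vertex because
the rows vanishing at it already cut it out of the flat `v 0 = 1`: if a nonnegative linear
functional vanishes at a point of an open segment inside the polytope, it vanishes on the whole
segment.
-/

/-- The explicit `25 × 6` matrix of inward-pointing normals of Santos and
Weibel's 5-dimensional all-but-simple spindle (rows `h₁,…,h₁₂` form the set `X`
and rows `h₂₁,…,h₃₃` form the set `Y`). -/
noncomputable def santosWeibelH : Fin 25 → Fin 6 → ℝ :=
  ![![1, 100, 0, 0, 21, -7],
    ![1, 100, 0, 0, 16, -15],
    ![1, 100, 0, 0, 0, -32],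
    ![1, 100, 0, 0, -16, -15],
    ![1, 100, 0, 0, -21, -7],
    ![1, 100, 0, 0, -20, -4],
    ![1, 100, 0, 0, 0, 32],
    ![1, 100, 0, 0, 20, -4],
    ![1, 100, 3/100, -1/50, 0, -30],
    ![1, 100, -3/100, -1/50, 0, 30],
    ![1, 100, -3/2000, 7/2000, 0, 318/10],
    ![1, 100, 3/2000, 7/2000, 0, -318/10],
    ![1, -100, 30, 0, 0, 0],
    ![1, -100, 4, -15, 0, 0],
    ![1, -100, 0, -33/2, 0, 0],
    ![1, -100, -1, -16, 0, 0],
    ![1, -100, -55/2, 0, 0, 0],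
    ![1, -100, -17, 18, 0, 0],
    ![1, -100, 0, 38, 0, 0],
    ![1, -100, 22, 17, 0, 0],
    ![1, -100, -10, 0, 1/5, -1/5],
    ![1, -100, 2999/100, 0, -3/25, -1/5],
    ![1, -100, 299999/10000, 0, 0, 1/100],
    ![1, -100, -2745/100, 0, 1/5000, 1/800],
    ![1, -100, -27, 0, 1/500, -1/80]]

/-- The Santos–Weibel polytope `P₅`, embedded in the flat `{1} × ℝ⁵`. -/
noncomputable def santosWeibelP : Set (Fin 6 → ℝ) :=
  {v | v 0 = 1 ∧ ∀ i : Fin 25, 0 ≤ ∑ j : Fin 6, santosWeibelH i j * v j}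

theorem mem_extremePoints_of_tight_eq {𝕜 E ι : Type*} [Ring 𝕜] [LinearOrder 𝕜]
    [IsStrictOrderedRing 𝕜] [AddCommMonoid E] [Module 𝕜 E] {P : Set E}
    {f : ι → E →ₗ[𝕜] 𝕜} (hP : ∀ v ∈ P, ∀ i, 0 ≤ f i v) {S : Set ι} {z : E} (hz : z ∈ P)
    (hzS : ∀ i ∈ S, f i z = 0) (huniq : ∀ v ∈ P, (∀ i ∈ S, f i v = 0) → v = z) :
    z ∈ P.extremePoints 𝕜 := by
  refine ⟨hz, fun x₁ hx₁ x₂ hx₂ ⟨a, b, ha, hb, _, hab⟩ ↦ huniq x₁ hx₁ fun i hi ↦ ?_⟩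
  have hsum : a * f i x₁ + b * f i x₂ = 0 := by
    rw [← hzS i hi, ← hab, map_add, map_smul, map_smul, smul_eq_mul, smul_eq_mul]
  have hterms := (add_eq_zero_iff_of_nonneg (mul_nonneg ha.le (hP _ hx₁ i))
    (mul_nonneg hb.le (hP _ hx₂ i))).1 hsum
  exact (mul_eq_zero.1 hterms.1).resolve_left ha.ne'

lemma santosWeibelH_apply_zero (i : Fin 25) : santosWeibelH i 0 = 1 := by
  fin_cases i <;> rfl

lemma santosWeibelH_apply_one (i : Fin 25) :
    santosWeibelH i 1 = if (i : ℕ) < 12 then 100 else -100 := by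
  fin_cases i <;> rfl

noncomputable def santosWeibelX : Fin 6 → ℝ := ![1, -1/100, 0, 0, 0, 0]

noncomputable def santosWeibelY : Fin 6 → ℝ := ![1, 1/100, 0, 0, 0, 0]

lemma sum_santosWeibelH_mul_santosWeibelX (i : Fin 25) :
    ∑ j : Fin 6, santosWeibelH i j * santosWeibelX j = if (i : ℕ) < 12 then 0 else 2 := by
  simp only [Fin.sum_univ_six, santosWeibelX, santosWeibelH_apply_zero, santosWeibelH_apply_one,
    Matrix.cons_val]
  split_ifs <;> norm_num

lemma sum_santosWeibelH_mul_santosWeibelY (i : Fin 25) :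
    ∑ j : Fin 6, santosWeibelH i j * santosWeibelY j = if (i : ℕ) < 12 then 2 else 0 := by
  simp only [Fin.sum_univ_six, santosWeibelY, santosWeibelH_apply_zero, santosWeibelH_apply_one,
    Matrix.cons_val]
  split_ifs <;> norm_num

lemma eq_santosWeibelX_of_tight (v : Fin 6 → ℝ) (h0 : v 0 = 1)
    (hX : ∀ i : Fin 25, (i : ℕ) < 12 → ∑ j : Fin 6, santosWeibelH i j * v j = 0) :
    v = santosWeibelX := by
  -- `h₁, h₃, h₅, h₇` (rows 0, 2, 4, 6) fix `v 1, v 4, v 5`; `h₉, h₁₀` then fix `v 2, v 3`.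
  have h₀ := hX 0 (by decide)
  have h₂ := hX 2 (by decide)
  have h₄ := hX 4 (by decide)
  have h₆ := hX 6 (by decide)
  have h₈ := hX 8 (by decide)
  have h₉ := hX 9 (by decide)
  simp only [santosWeibelH, Fin.sum_univ_six, Matrix.cons_val_zero, Matrix.cons_val_one,
    Matrix.cons_val] at h₀ h₂ h₄ h₆ h₈ h₉
  funext j
  fin_cases j <;> simp [santosWeibelX] <;> linarith

lemma eq_santosWeibelY_of_tight (v : Fin 6 → ℝ) (h0 : v 0 = 1)
    (hY : ∀ i : Fin 25, 12 ≤ (i : ℕ) → ∑ j : Fin 6, santosWeibelH i j * v j = 0) :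
    v = santosWeibelY := by
  -- `h₂₁, h₂₅` (rows 12, 16) fix `v 1, v 2`; `h₂₃` fixes `v 3`, and `h₂₉, h₃₁` fix `v 4, v 5`.
  have h₁₂ := hY 12 (by decide)
  have h₁₄ := hY 14 (by decide)
  have h₁₆ := hY 16 (by decide)
  have h₂₀ := hY 20 (by decide)
  have h₂₂ := hY 22 (by decide)
  simp only [santosWeibelH, Fin.sum_univ_six, Matrix.cons_val_zero, Matrix.cons_val_one,
    Matrix.cons_val] at h₁₂ h₁₄ h₁₆ h₂₀ h₂₂
  funext j
  fin_cases j <;> simp [santosWeibelY] <;> linarith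

lemma santosWeibelX_mem : santosWeibelX ∈ santosWeibelP :=
  ⟨rfl, fun i ↦ by rw [sum_santosWeibelH_mul_santosWeibelX]; split_ifs <;> norm_num⟩

lemma santosWeibelY_mem : santosWeibelY ∈ santosWeibelP :=
  ⟨rfl, fun i ↦ by rw [sum_santosWeibelH_mul_santosWeibelY]; split_ifs <;> norm_num⟩

lemma santosWeibelX_mem_extremePoints : santosWeibelX ∈ santosWeibelP.extremePoints ℝ :=
  mem_extremePoints_of_tight_eq (f := fun i ↦ dotProductBilin ℝ ℝ (santosWeibelH i))
    (S := {i : Fin 25 | (i : ℕ) < 12}) (fun _ hv i ↦ hv.2 i) santosWeibelX_mem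
    (fun i hi ↦ (sum_santosWeibelH_mul_santosWeibelX i).trans (if_pos hi))
    (fun v hv hX ↦ eq_santosWeibelX_of_tight v hv.1 hX)

lemma santosWeibelY_mem_extremePoints : santosWeibelY ∈ santosWeibelP.extremePoints ℝ :=
  mem_extremePoints_of_tight_eq (f := fun i ↦ dotProductBilin ℝ ℝ (santosWeibelH i))
    (S := {i : Fin 25 | 12 ≤ (i : ℕ)}) (fun _ hv i ↦ hv.2 i) santosWeibelY_mem
    (fun i hi ↦ (sum_santosWeibelH_mul_santosWeibelY i).trans (if_neg (not_lt.2 hi)))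
    (fun v hv hY ↦ eq_santosWeibelY_of_tight v hv.1 hY)

/-- The 5-dimensional polytope `P₅` defined by the 25 explicit inequalities of
Santos–Weibel is a spindle with apexes `x` and `y`: the vertex `x` satisfies
the first 12 inequalities with equality and the last 13 strictly, the vertex
`y` satisfies the last 13 with equality and the first 12 strictly, and every
facet of `P₅` contains `x` or `y`. -/
theorem santosWeibelP_is_spindle :
    ∃ x y : Fin 6 → ℝ,
      x ∈ Set.extremePoints ℝ santosWeibelP ∧
      y ∈ Set.extremePoints ℝ santosWeibelP ∧
      (∀ i : Fin 25, (i : ℕ) < 12 → ∑ j : Fin 6, santosWeibelH i j * x j = 0) ∧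
      (∀ i : Fin 25, 12 ≤ (i : ℕ) → 0 < ∑ j : Fin 6, santosWeibelH i j * x j) ∧
      (∀ i : Fin 25, 12 ≤ (i : ℕ) → ∑ j : Fin 6, santosWeibelH i j * y j = 0) ∧
      (∀ i : Fin 25, (i : ℕ) < 12 → 0 < ∑ j : Fin 6, santosWeibelH i j * y j) ∧
      (∀ i : Fin 25, (∑ j : Fin 6, santosWeibelH i j * x j = 0) ∨
        (∑ j : Fin 6, santosWeibelH i j * y j = 0)) := by
  refine ⟨santosWeibelX, santosWeibelY, santosWeibelX_mem_extremePoints,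
    santosWeibelY_mem_extremePoints, ?_, ?_, ?_, ?_, fun i ↦ ?_⟩
  all_goals simp only [sum_santosWeibelH_mul_santosWeibelX, sum_santosWeibelH_mul_santosWeibelY]
  · intro i hi; simp [hi]
  · intro i hi; simp [hi.not_gt]
  · intro i hi; simp [hi.not_gt]
  · intro i hi; simp [hi]
  · by_cases hi : (i : ℕ) < 12 <;> simp [hi]
end
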